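/- arXiv:1611.03071 — 2 statements merged into one kernel-verified Lean document; each statement's English description precedes it below -/
import Mathlib

section
/- Fix an integer n ≥ 2 and γ ∈ (0, 1). In the lower-bound chain with n states and MDP M(1), for every state j ∈ {1,…,n} the optimal value satisfies V*(j) = (1 + γ^{n−j}) / (2·(1−γ)), and this supremum is attained by the constant action sequence that always plays true (always moves right). -/
/-- The deterministic trajectory in the lower-bound chain with states `{1, …, n}`:
from state `s`, action `true` moves right (capped at `n`), action `false` resets to `1`. -/
def traj (n : ℕ) (a : ℕ → Bool) (s : ℕ) : ℕ → ℕ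
  | 0 => s
  | t + 1 => if a t then min (traj n a s t + 1) n else 1

/-- The reward of a state in the MDP `M(1)`: `1/2` at states `1, …, n-1` and `1` at state `n`. -/
noncomputable def reward (n : ℕ) (s : ℕ) : ℝ := if s < n then 1 / 2 else 1

/-- The `γ`-discounted reward of the action sequence `a` started from state `s`. -/
noncomputable def discReward (n : ℕ) (γ : ℝ) (a : ℕ → Bool) (s : ℕ) : ℝ :=
  ∑' t : ℕ, γ ^ t * reward n (traj n a s t)

/-- The optimal value `V*(s)`: the supremum of the `γ`-discounted reward over
all action sequences. -/
noncomputable def Vstar (n : ℕ) (γ : ℝ) (s : ℕ) : ℝ :=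
  ⨆ a : ℕ → Bool, discReward n γ a s

/-!
Any trajectory from `s` satisfies `S_t ≤ s + t`, and the reward is monotone in the state, so
moving right at every step maximises every term of the discounted sum at once. Along that
trajectory the reward is `1/2` before time `n - s` and `1` from then on, which sums to a
geometric series plus half of its tail from `n - s`.
-/

lemma reward_mono (n : ℕ) : Monotone (reward n) := by
  intro s s' h
  unfold reward
  split_ifs <;> first | omega | norm_num

lemma traj_le_add (n : ℕ) (a : ℕ → Bool) (s : ℕ) : ∀ t, traj n a s t ≤ s + t
  | 0 => le_rfl
  | t + 1 => by
    have := traj_le_add n a s t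
    simp only [traj]
    split <;> omega

lemma traj_true_succ (n s : ℕ) : ∀ t, traj n (fun _ => true) s (t + 1) = min (s + t + 1) n
  | 0 => rfl
  | t + 1 => by
    have := traj_true_succ n s t
    simp only [traj, if_true] at this ⊢
    omega

-- The reward only sees whether the state has reached `n`, which the cap at `n` does not change.
lemma reward_traj_true (n s t : ℕ) :
    reward n (traj n (fun _ => true) s t) = reward n (s + t) := by
  cases t with
  | zero => rfl
  | succ t =>
    rw [traj_true_succ]
    unfold reward
    congr 1
    simp only [eq_iff_iff, min_lt_iff, lt_self_iff_false, or_false]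
    omega

lemma reward_traj_le (n : ℕ) (a : ℕ → Bool) (s t : ℕ) :
    reward n (traj n a s t) ≤ reward n (traj n (fun _ => true) s t) :=
  reward_traj_true n s t ▸ reward_mono n (traj_le_add n a s t)

lemma hasSum_geometric_tail {γ : ℝ} (hγ0 : 0 ≤ γ) (hγ1 : γ < 1) (k : ℕ) :
    HasSum (fun t => if k ≤ t then γ ^ t else 0) (γ ^ k / (1 - γ)) := by
  rw [← hasSum_nat_add_iff' k, Finset.sum_eq_zero fun i hi => if_neg (by simpa using hi),
    sub_zero]
  simpa [pow_add, mul_comm, div_eq_mul_inv] using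
    (hasSum_geometric_of_lt_one hγ0 hγ1).mul_left (γ ^ k)

lemma hasSum_discounted_reward_add {γ : ℝ} (hγ0 : 0 ≤ γ) (hγ1 : γ < 1) (n s : ℕ) :
    HasSum (fun t => γ ^ t * reward n (s + t)) ((1 + γ ^ (n - s)) / (2 * (1 - γ))) := by
  have hsplit : ∀ t, γ ^ t * reward n (s + t) =
      1 / 2 * γ ^ t + 1 / 2 * (if n - s ≤ t then γ ^ t else 0) := by
    intro t
    unfold reward
    split_ifs <;> first | omega | ring
  have hγ : 1 - γ ≠ 0 := by linarith
  have hsum : (1 + γ ^ (n - s)) / (2 * (1 - γ)) =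
      1 / 2 * (1 - γ)⁻¹ + 1 / 2 * (γ ^ (n - s) / (1 - γ)) := by
    field_simp
  rw [hsum, funext hsplit]
  exact ((hasSum_geometric_of_lt_one hγ0 hγ1).mul_left _).add
    ((hasSum_geometric_tail hγ0 hγ1 (n - s)).mul_left _)

lemma summable_discounted_reward {γ : ℝ} (hγ0 : 0 ≤ γ) (hγ1 : γ < 1) (n : ℕ)
    (f : ℕ → ℕ) :
    Summable (fun t => γ ^ t * reward n (f t)) := by
  refine (summable_geometric_of_lt_one hγ0 hγ1).of_nonneg_of_le (fun t => ?_) (fun t => ?_)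
  all_goals
    have := pow_nonneg hγ0 t
    unfold reward
    split_ifs <;> nlinarith

lemma discReward_true {γ : ℝ} (hγ0 : 0 ≤ γ) (hγ1 : γ < 1) (n s : ℕ) :
    discReward n γ (fun _ => true) s = (1 + γ ^ (n - s)) / (2 * (1 - γ)) := by
  simp only [discReward, reward_traj_true]
  exact (hasSum_discounted_reward_add hγ0 hγ1 n s).tsum_eq

lemma discReward_le_discReward_true {γ : ℝ} (hγ0 : 0 ≤ γ) (hγ1 : γ < 1) (n : ℕ)
    (a : ℕ → Bool) (s : ℕ) :
    discReward n γ a s ≤ discReward n γ (fun _ => true) s :=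
  (summable_discounted_reward hγ0 hγ1 n _).tsum_le_tsum
    (fun t => mul_le_mul_of_nonneg_left (reward_traj_le n a s t) (pow_nonneg hγ0 t))
    (summable_discounted_reward hγ0 hγ1 n _)

lemma Vstar_eq_discReward_of_forall_le {n : ℕ} {γ : ℝ} {s : ℕ} {b : ℕ → Bool}
    (h : ∀ a, discReward n γ a s ≤ discReward n γ b s) :
    Vstar n γ s = discReward n γ b s :=
  le_antisymm (ciSup_le h) (le_ciSup ⟨_, Set.forall_mem_range.mpr h⟩ b)

theorem vstar_eq_general (n : ℕ) (γ : ℝ) (hγ0 : 0 < γ) (hγ1 : γ < 1) (j : ℕ) :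
    Vstar n γ j = (1 + γ ^ (n - j)) / (2 * (1 - γ)) ∧
    discReward n γ (fun _ => true) j = (1 + γ ^ (n - j)) / (2 * (1 - γ)) := by
  have hvalue := discReward_true hγ0.le hγ1 n j
  refine ⟨?_, hvalue⟩
  rw [← hvalue]
  exact Vstar_eq_discReward_of_forall_le (discReward_le_discReward_true hγ0.le hγ1 n · j)

/-- In the chain MDP `M(1)` with `n ≥ 2` states and `γ ∈ (0,1)`,
the optimal value of state `j ∈ {1,…,n}` equals `(1 + γ^(n-j)) / (2(1-γ))`, and the
supremum is attained by the action sequence that always moves right. -/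
theorem vstar_eq (n : ℕ) (hn : 2 ≤ n) (γ : ℝ) (hγ0 : 0 < γ) (hγ1 : γ < 1)
    (j : ℕ) (hj1 : 1 ≤ j) (hjn : j ≤ n) :
    Vstar n γ j = (1 + γ ^ (n - j)) / (2 * (1 - γ)) ∧
    discReward n γ (fun _ => true) j = (1 + γ ^ (n - j)) / (2 * (1 - γ)) :=
  vstar_eq_general n γ hγ0 hγ1 j
end

section
/- Fix an integer n ≥ 2 and γ ∈ (0, 1). In the lower-bound chain with n states and MDP M(1), for all states j ≤ j' in {1,…,n} and every action sequence a : ℕ → Bool, the γ-discounted reward of a started from j is at most the γ-discounted reward of a started from j'. Consequently the optimal value V*(j) is nondecreasing in j. -/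
lemma traj_le (n : ℕ) (a : ℕ → Bool) {j j' : ℕ} (h : j ≤ j') (t : ℕ) :
    traj n a j t ≤ traj n a j' t := by
  induction t with
  | zero => exact h
  | succ t ih =>
    simp only [traj]
    split
    · exact min_le_min (by omega) le_rfl
    · exact le_rfl

lemma reward_mono_s3 (n : ℕ) {s s' : ℕ} (h : s ≤ s') : reward n s ≤ reward n s' := by
  unfold reward
  split <;> split <;> norm_num <;> omega

lemma reward_nonneg (n s : ℕ) : 0 ≤ reward n s := by
  unfold reward; split <;> norm_num

lemma reward_le_one (n s : ℕ) : reward n s ≤ 1 := by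
  unfold reward; split <;> norm_num

lemma discReward_summable (n : ℕ) (γ : ℝ) (hγ0 : 0 < γ) (hγ1 : γ < 1)
    (a : ℕ → Bool) (s : ℕ) :
    Summable (fun t : ℕ => γ ^ t * reward n (traj n a s t)) := by
  apply Summable.of_nonneg_of_le
    (fun t => mul_nonneg (pow_nonneg hγ0.le _) (reward_nonneg _ _))
    (fun t => ?_) (summable_geometric_of_lt_one hγ0.le hγ1)
  calc γ ^ t * reward n (traj n a s t) ≤ γ ^ t * 1 := by
        exact mul_le_mul_of_nonneg_left (reward_le_one _ _) (pow_nonneg hγ0.le _)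
    _ = γ ^ t := mul_one _

/-- In the chain MDP `M(1)` with `n ≥ 2` states and `γ ∈ (0,1)`, the
discounted reward of any fixed action sequence is monotone in the start state, and hence
the optimal value `V*` is nondecreasing in the state index. -/
theorem vstar_mono (n : ℕ) (hn : 2 ≤ n) (γ : ℝ) (hγ0 : 0 < γ) (hγ1 : γ < 1)
    (j j' : ℕ) (hj1 : 1 ≤ j) (hjj' : j ≤ j') (hj'n : j' ≤ n) :
    (∀ a : ℕ → Bool, discReward n γ a j ≤ discReward n γ a j') ∧
    Vstar n γ j ≤ Vstar n γ j' := by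
  have hmono : ∀ a : ℕ → Bool, discReward n γ a j ≤ discReward n γ a j' := by
    intro a
    apply Summable.tsum_le_tsum _ (discReward_summable n γ hγ0 hγ1 a j)
      (discReward_summable n γ hγ0 hγ1 a j')
    intro t
    exact mul_le_mul_of_nonneg_left (reward_mono_s3 n (traj_le n a hjj' t))
      (pow_nonneg hγ0.le _)
  refine ⟨hmono, ?_⟩
  have hbdd : BddAbove (Set.range fun a : ℕ → Bool => discReward n γ a j') := by
    refine ⟨(1 - γ)⁻¹, ?_⟩
    rintro x ⟨a, rfl⟩
    calc discReward n γ a j' ≤ ∑' t : ℕ, γ ^ t := by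
          apply Summable.tsum_le_tsum _ (discReward_summable n γ hγ0 hγ1 a j')
            (summable_geometric_of_lt_one hγ0.le hγ1)
          intro t
          calc γ ^ t * reward n (traj n a j' t) ≤ γ ^ t * 1 :=
                mul_le_mul_of_nonneg_left (reward_le_one _ _) (pow_nonneg hγ0.le _)
            _ = γ ^ t := mul_one _
      _ = (1 - γ)⁻¹ := tsum_geometric_of_lt_one hγ0.le hγ1
  exact ciSup_mono hbdd hmono
end
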